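/- Let A be a Noetherian integral domain that is not a field. Suppose that for every pair of nonzero integrally closed ideals I, J of A there exist a natural number n >= 1 and a nonzero integrally closed ideal K of A with \overline{J^n} = \overline{IK} (i.e., the monoid ic(A) under I*J = \overline{IJ} is primary). Then A is a local domain of Krull dimension 1. -/

import Mathlib

/-!
A prime ideal is integrally closed, so for nonzero primes `p`, `q` primarity gives
`q ^ n ⊆ \overline{q ^ n} = \overline{p K} ⊆ p`, hence `q ⊆ p`. Thus any two nonzero primes
coincide: the domain has a single nonzero prime ideal, which is then its unique maximal ideal.
-/

/-- `x` satisfies an equation of integral dependence over the ideal `I`: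
`x ^ n + a 1 * x ^ (n-1) + ⋯ + a (n-1) * x + a n = 0` with `a i ∈ I ^ i`. -/
def IsIntegralOverIdeal {A : Type*} [CommRing A] (I : Ideal A) (x : A) : Prop :=
  ∃ n : ℕ, 0 < n ∧ ∃ a : ℕ → A, (∀ i, 1 ≤ i → i ≤ n → a i ∈ I ^ i) ∧
    x ^ n + ∑ i ∈ Finset.Icc 1 n, a i * x ^ (n - i) = 0

/-- The integral closure `\overline{I}` of an ideal `I`.  The set of elements integral
over `I` is in fact an ideal, so taking the ideal span of this set does not change it. -/
def intCl {A : Type*} [CommRing A] (I : Ideal A) : Ideal A :=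
  Ideal.span {x | IsIntegralOverIdeal I x}

section IntegralClosure

variable {A : Type*} [CommRing A]

lemma le_intCl (I : Ideal A) : I ≤ intCl I := by
  intro x hx
  refine Ideal.subset_span ⟨1, one_pos, fun i => if i = 1 then -x else 0, ?_, by simp⟩
  intro i h1 h2
  obtain rfl : i = 1 := le_antisymm h2 h1
  simpa using I.neg_mem hx

lemma Ideal.IsPrime.intCl_le {I p : Ideal A} (hp : p.IsPrime) (hIp : I ≤ p) : intCl I ≤ p := by
  refine Ideal.span_le.mpr ?_
  rintro x ⟨n, hn, a, ha, heq⟩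
  have hsum : ∑ i ∈ Finset.Icc 1 n, a i * x ^ (n - i) ∈ p := by
    refine Ideal.sum_mem _ fun i hi => ?_
    obtain ⟨hi1, hin⟩ := Finset.mem_Icc.mp hi
    exact p.mul_mem_right _ (hIp (Ideal.pow_le_self (by omega) (ha i hi1 hin)))
  have hxn : x ^ n ∈ p := by
    rw [eq_neg_of_add_eq_zero_left heq]
    exact p.neg_mem hsum
  exact hp.mem_of_pow_mem n hxn

lemma Ideal.IsPrime.intCl_eq {p : Ideal A} (hp : p.IsPrime) : intCl p = p :=
  le_antisymm (hp.intCl_le le_rfl) (le_intCl p)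

lemma Ideal.IsPrime.le_of_intCl_pow_eq_intCl_mul {p q K : Ideal A} {n : ℕ} (hp : p.IsPrime)
    (h : intCl (q ^ n) = intCl (p * K)) : q ≤ p :=
  hp.le_of_pow_le <| calc
    q ^ n ≤ intCl (q ^ n) := le_intCl _
    _ = intCl (p * K) := h
    _ ≤ p := hp.intCl_le Ideal.mul_le_left

end IntegralClosure

section NonzeroPrimesComparable

variable {A : Type*} [CommRing A]

lemma isLocalRing_of_forall_prime_le [Nontrivial A] (hA : ¬IsField A)
    (h : ∀ p q : Ideal A, p.IsPrime → p ≠ ⊥ → q.IsPrime → q ≠ ⊥ → q ≤ p) : IsLocalRing A := by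
  obtain ⟨m, hm⟩ := Ideal.exists_maximal A
  have hm0 : m ≠ ⊥ := (Ideal.bot_lt_of_maximal m hA).ne'
  refine IsLocalRing.of_unique_max_ideal ⟨m, hm, fun m' hm' => ?_⟩
  have hm'0 : m' ≠ ⊥ := (Ideal.bot_lt_of_maximal m' hA).ne'
  exact le_antisymm (h m m' hm.isPrime hm0 hm'.isPrime hm'0)
    (h m' m hm'.isPrime hm'0 hm.isPrime hm0)

lemma krullDimLE_one_of_forall_prime_le
    (h : ∀ p q : Ideal A, p.IsPrime → p ≠ ⊥ → q.IsPrime → q ≠ ⊥ → q ≤ p) :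
    Ring.KrullDimLE 1 A := by
  refine Ring.KrullDimLE.mk₁' fun p hp0 hp => ?_
  obtain ⟨m, hm, hpm⟩ := Ideal.exists_le_maximal p hp.ne_top
  obtain rfl : p = m := le_antisymm hpm (h p m hp hp0 hm.isPrime (ne_bot_of_le_ne_bot hp0 hpm))
  exact hm

lemma ringKrullDim_eq_one_of_not_isField [IsDomain A] [Ring.KrullDimLE 1 A] (hA : ¬IsField A) :
    ringKrullDim A = 1 := by
  refine eq_of_le_of_not_lt ?_ fun hlt => hA ?_
  · rw [← Nat.cast_one, ← Ring.krullDimLE_iff]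
    infer_instance
  · have : Ring.KrullDimLE 0 A := Ring.krullDimLE_iff.mpr (Order.le_of_lt_succ hlt)
    exact Ring.KrullDimLE.isField_of_isDomain

end NonzeroPrimesComparable

theorem primary_implies_dim_one_local_general {A : Type*} [CommRing A] [IsDomain A]
    (hA : ¬ IsField A)
    (hprim : ∀ I J : Ideal A, I ≠ ⊥ → intCl I = I → J ≠ ⊥ → intCl J = J →
      ∃ n : ℕ, 1 ≤ n ∧ ∃ K : Ideal A, K ≠ ⊥ ∧ intCl K = K ∧ intCl (J ^ n) = intCl (I * K)) :
    IsLocalRing A ∧ ringKrullDim A = 1 := by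
  have hle : ∀ p q : Ideal A, p.IsPrime → p ≠ ⊥ → q.IsPrime → q ≠ ⊥ → q ≤ p := by
    intro p q hp hp0 hq hq0
    obtain ⟨n, -, K, -, -, h⟩ := hprim p q hp0 hp.intCl_eq hq0 hq.intCl_eq
    exact hp.le_of_intCl_pow_eq_intCl_mul h
  have := krullDimLE_one_of_forall_prime_le hle
  exact ⟨isLocalRing_of_forall_prime_le hA hle, ringKrullDim_eq_one_of_not_isField hA⟩

/-- If the monoid of nonzero integrally closed ideals of a Noetherian domain (not a field)
is primary, then the domain is local of Krull dimension one. -/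
theorem primary_implies_dim_one_local {A : Type*} [CommRing A] [IsDomain A] [IsNoetherianRing A]
    (hA : ¬ IsField A)
    (hprim : ∀ I J : Ideal A, I ≠ ⊥ → intCl I = I → J ≠ ⊥ → intCl J = J →
      ∃ n : ℕ, 1 ≤ n ∧ ∃ K : Ideal A, K ≠ ⊥ ∧ intCl K = K ∧ intCl (J ^ n) = intCl (I * K)) :
    IsLocalRing A ∧ ringKrullDim A = 1 :=
  primary_implies_dim_one_local_general hA hprim
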